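/- arXiv:1802.03216 — 5 statements merged into one kernel-verified Lean document; each statement's English description precedes it below -/
import Mathlib

section
/- Let A be a finite nonempty type, ρ : A → ℝ with ρ(a) > 0 for all a and Σ_a ρ(a) = 1, Q : A → ℝ, and β < 0. Then inf over π in the probability simplex Δ(A) of [Σ_a π(a)·Q(a) − (1/β)·Σ_a π(a)·log(π(a)/ρ(a))] equals (1/β)·log Σ_a ρ(a)·exp(β·Q(a)), and the infimum is attained. -/
/-- For `β < 0`, the infimum over the probability simplex of the free-energy objective
`Σ_a π(a)·Q(a) − (1/β)·Σ_a π(a)·log(π(a)/ρ(a))` equals the weighted log-sum-exp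
`(1/β)·log Σ_a ρ(a)·exp(β·Q(a))`, and the infimum is attained. -/
theorem freeEnergy_isLeast_logSumExp (A : Type*) [Fintype A] [Nonempty A]
    (ρ : A → ℝ) (hρ : ∀ a, 0 < ρ a) (hρ1 : ∑ a, ρ a = 1) (Q : A → ℝ) (β : ℝ) (hβ : β < 0) :
    IsLeast
      ((fun π : A → ℝ => ∑ a, π a * Q a - (1 / β) * ∑ a, π a * Real.log (π a / ρ a)) ''
        {π : A → ℝ | (∀ a, 0 ≤ π a) ∧ ∑ a, π a = 1})
      ((1 / β) * Real.log (∑ a, ρ a * Real.exp (β * Q a))) ∧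
    sInf ((fun π : A → ℝ => ∑ a, π a * Q a - (1 / β) * ∑ a, π a * Real.log (π a / ρ a)) ''
        {π : A → ℝ | (∀ a, 0 ≤ π a) ∧ ∑ a, π a = 1})
      = (1 / β) * Real.log (∑ a, ρ a * Real.exp (β * Q a)) := by
  set r : A → ℝ := fun a => ρ a * Real.exp (β * Q a) with hr
  have hrpos : ∀ a, 0 < r a := fun a => mul_pos (hρ a) (Real.exp_pos _)
  set Z : ℝ := ∑ a, r a with hZ
  have hZpos : 0 < Z := Finset.sum_pos (fun a _ => hrpos a) Finset.univ_nonempty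
  have hβne : β ≠ 0 := ne_of_lt hβ
  have hleast : IsLeast
      ((fun π : A → ℝ => ∑ a, π a * Q a - (1 / β) * ∑ a, π a * Real.log (π a / ρ a)) ''
        {π : A → ℝ | (∀ a, 0 ≤ π a) ∧ ∑ a, π a = 1})
      ((1 / β) * Real.log Z) := by
    constructor
    · -- attained at π* = r / Z
      refine ⟨fun a => r a / Z, ⟨fun a => (div_pos (hrpos a) hZpos).le, ?_⟩, ?_⟩
      · rw [← Finset.sum_div, ← hZ, div_self hZpos.ne']
      · have hlog : ∀ a, Real.log ((r a / Z) / ρ a) = β * Q a - Real.log Z := by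
          intro a
          have : (r a / Z) / ρ a = Real.exp (β * Q a) / Z := by
            rw [hr, div_div, mul_comm Z (ρ a), ← div_div,
              mul_div_cancel_left₀ _ (hρ a).ne']
          rw [this, Real.log_div (Real.exp_pos _).ne' hZpos.ne', Real.log_exp]
        simp only [hlog]
        have : ∑ a, r a / Z * (β * Q a - Real.log Z)
            = β * (∑ a, r a / Z * Q a) - Real.log Z := by
          calc ∑ a, r a / Z * (β * Q a - Real.log Z)
              = ∑ a, (β * (r a / Z * Q a) - Real.log Z * (r a / Z)) :=
                Finset.sum_congr rfl fun a _ => by ring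
            _ = β * (∑ a, r a / Z * Q a) - Real.log Z := by
                rw [Finset.sum_sub_distrib, ← Finset.mul_sum, ← Finset.mul_sum,
                  ← Finset.sum_div, ← hZ, div_self hZpos.ne', mul_one]
        rw [this]
        field_simp
        ring
    · -- lower bound
      rintro x ⟨π, ⟨hπ0, hπ1⟩, rfl⟩
      simp only
      -- key inequality: ∑ π a * (β * Q a - log (π a / ρ a)) ≤ log Z
      have key : ∑ a, π a * (β * Q a - Real.log (π a / ρ a)) ≤ Real.log Z := by
        have pointwise : ∀ a, π a * (β * Q a - Real.log (π a / ρ a)) - π a * Real.log Z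
            ≤ r a / Z - π a := by
          intro a
          rcases eq_or_lt_of_le (hπ0 a) with h0 | hpos
          · simp [← h0, le_div_iff₀ hZpos, (hrpos a).le]
          · have h1 : β * Q a - Real.log (π a / ρ a) - Real.log Z
                = Real.log (r a / (Z * π a)) := by
              rw [Real.log_div (hrpos a).ne' (mul_pos hZpos hpos).ne',
                Real.log_mul hZpos.ne' hpos.ne', Real.log_div hpos.ne' (hρ a).ne',
                hr, Real.log_mul (hρ a).ne' (Real.exp_pos _).ne', Real.log_exp]
              ring
            have h2 : Real.log (r a / (Z * π a)) ≤ r a / (Z * π a) - 1 :=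
              Real.log_le_sub_one_of_pos (div_pos (hrpos a) (mul_pos hZpos hpos))
            calc π a * (β * Q a - Real.log (π a / ρ a)) - π a * Real.log Z
                = π a * Real.log (r a / (Z * π a)) := by rw [← h1]; ring
              _ ≤ π a * (r a / (Z * π a) - 1) :=
                  mul_le_mul_of_nonneg_left h2 hpos.le
              _ = r a / Z - π a := by field_simp
        have hsum := Finset.sum_le_sum (s := Finset.univ) (fun a _ => pointwise a)
        rw [Finset.sum_sub_distrib, Finset.sum_sub_distrib, ← Finset.sum_mul, hπ1,
          one_mul, ← Finset.sum_div, ← hZ, div_self hZpos.ne'] at hsum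
        linarith
      have hexp : ∑ a, π a * Q a - (1 / β) * ∑ a, π a * Real.log (π a / ρ a)
          = (1 / β) * ∑ a, π a * (β * Q a - Real.log (π a / ρ a)) := by
        have ht : ∀ a, (1 / β) * (π a * (β * Q a - Real.log (π a / ρ a)))
            = π a * Q a - (1 / β) * (π a * Real.log (π a / ρ a)) := fun a => by
          field_simp
        rw [Finset.mul_sum, Finset.mul_sum]
        simp only [ht]
        rw [Finset.sum_sub_distrib]
      rw [hexp]
      have h1β : 1 / β < 0 := div_neg_of_pos_of_neg one_pos hβ
      exact mul_le_mul_of_nonpos_left key h1β.le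
  exact ⟨hleast, hleast.csInf_eq⟩
end

section
/- (Lemma 1) Assume β_pl > 0 and β_op ≠ 0. Then for every V : S → ℝ and every state s ∈ S, (B_pl V)(s) = (B_op V)(s), i.e. sup_{π∈Δ(A)} ext_{σ∈Δ(B)} f(π,σ,s,V) = ext_{σ∈Δ(B)} sup_{π∈Δ(A)} f(π,σ,s,V). -/
noncomputable section

/-- The probability simplex over a finite type `X`. -/
def simplex (X : Type*) [Fintype X] : Set (X → ℝ) :=
  {p | (∀ x, 0 ≤ p x) ∧ ∑ x, p x = 1}

variable {S A B : Type*} [Fintype S] [Fintype A] [Fintype B]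

/-- The free energy `f(π, σ, s, V)` of the two-player soft stochastic game: expected
one-step reward plus discounted continuation value, minus the information costs of the
player's policy `π` and the opponent's policy `σ` (convention `0·log 0 = 0` holds since
`Real.log 0 = 0`). -/
def freeEnergy (R : S → A → B → ℝ) (T : S → A → B → S → ℝ) (γ : ℝ)
    (ρpl : S → A → ℝ) (ρop : S → B → ℝ) (βpl βop : ℝ)
    (π : A → ℝ) (σ : B → ℝ) (s : S) (V : S → ℝ) : ℝ :=
  (∑ a, ∑ b, π a * σ b * (R s a b + γ * ∑ s', T s a b s' * V s'))
    - (1 / βpl) * ∑ a, π a * Real.log (π a / ρpl s a)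
    - (1 / βop) * ∑ b, σ b * Real.log (σ b / ρop s b)

/-- The extremum operator over the opponent's simplex: a supremum if `β_op > 0`
and an infimum if `β_op < 0`. -/
def extOp (βop : ℝ) (g : (B → ℝ) → ℝ) : ℝ :=
  if 0 < βop then sSup (g '' simplex B) else sInf (g '' simplex B)

/-- The player's soft Bellman operator `(B_pl V)(s) = sup_π ext_σ f(π, σ, s, V)`. -/
def Bpl (R : S → A → B → ℝ) (T : S → A → B → S → ℝ) (γ : ℝ)
    (ρpl : S → A → ℝ) (ρop : S → B → ℝ) (βpl βop : ℝ) (V : S → ℝ) (s : S) : ℝ :=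
  sSup ((fun π => extOp βop (fun σ => freeEnergy R T γ ρpl ρop βpl βop π σ s V)) '' simplex A)

/-- The opponent's soft Bellman operator `(B_op V)(s) = ext_σ sup_π f(π, σ, s, V)`. -/
def Bop (R : S → A → B → ℝ) (T : S → A → B → S → ℝ) (γ : ℝ)
    (ρpl : S → A → ℝ) (ρop : S → B → ℝ) (βpl βop : ℝ) (V : S → ℝ) (s : S) : ℝ :=
  extOp βop (fun σ => sSup ((fun π => freeEnergy R T γ ρpl ρop βpl βop π σ s V) '' simplex A))

section klsec
variable {X : Type*} [Fintype X]
variable {X : Type*} [Fintype X]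

lemma kl_nonneg (p q : X → ℝ) (hp : ∀ x, 0 ≤ p x) (hq : ∀ x, 0 < q x)
    (hpq : ∑ x, p x = ∑ x, q x) : 0 ≤ ∑ x, p x * Real.log (p x / q x) := by
  have key : ∀ x, p x - q x ≤ p x * Real.log (p x / q x) := by
    intro x
    rcases eq_or_lt_of_le (hp x) with h0 | h0
    · simp [← h0, (hq x).le]
    · have h1 : Real.log (q x / p x) ≤ q x / p x - 1 :=
        Real.log_le_sub_one_of_pos (div_pos (hq x) h0)
      have h2 : Real.log (p x / q x) = - Real.log (q x / p x) := by
        rw [← Real.log_inv]; congr 1; field_simp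
      have h3 : p x * (q x / p x) = q x := by field_simp
      nlinarith [mul_le_mul_of_nonneg_left h1 h0.le]
  calc (0:ℝ) = ∑ x, p x - ∑ x, q x := by rw [hpq]; ring
    _ = ∑ x, (p x - q x) := by rw [Finset.sum_sub_distrib]
    _ ≤ _ := Finset.sum_le_sum fun x _ => key x

/-- The Gibbs distribution for inverse temperature `β`, prior `ρ`, utilities `u`. -/
def gibbs (β : ℝ) (ρ u : X → ℝ) : X → ℝ :=
  fun x => ρ x * Real.exp (β * u x) / ∑ y, ρ y * Real.exp (β * u y)

section gibbs
variable [Nonempty X] {β : ℝ} {ρ u : X → ℝ} (hρ : ∀ x, 0 < ρ x)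
include hρ

lemma gibbsZ_pos : 0 < ∑ y, ρ y * Real.exp (β * u y) :=
  Finset.sum_pos (fun y _ => mul_pos (hρ y) (Real.exp_pos _)) Finset.univ_nonempty

lemma gibbs_pos (x : X) : 0 < gibbs β ρ u x :=
  div_pos (mul_pos (hρ x) (Real.exp_pos _)) (gibbsZ_pos hρ)

lemma gibbs_sum_one : ∑ x, gibbs β ρ u x = 1 := by
  unfold gibbs; rw [← Finset.sum_div]
  exact div_self (gibbsZ_pos hρ).ne'

lemma gibbs_mem_simplex : gibbs β ρ u ∈ simplex X :=
  ⟨fun x => (gibbs_pos hρ x).le, gibbs_sum_one hρ⟩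

lemma gibbs_identity (hβ : β ≠ 0) {π : X → ℝ} (hπ : π ∈ simplex X) :
    ∑ x, π x * u x - (1/β) * ∑ x, π x * Real.log (π x / ρ x)
      = (1/β) * Real.log (∑ y, ρ y * Real.exp (β * u y))
        - (1/β) * ∑ x, π x * Real.log (π x / gibbs β ρ u x) := by
  obtain ⟨hπ0, hπ1⟩ := hπ
  set Z := ∑ y, ρ y * Real.exp (β * u y) with hZ
  have hZpos : 0 < Z := gibbsZ_pos hρ
  have key : ∀ x, π x * Real.log (π x / gibbs β ρ u x)
      = π x * Real.log (π x / ρ x) + π x * Real.log Z - π x * (β * u x) := by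
    intro x
    rcases eq_or_lt_of_le (hπ0 x) with h0 | h0
    · simp [← h0]
    · have hg : gibbs β ρ u x = ρ x * Real.exp (β * u x) / Z := rfl
      rw [Real.log_div h0.ne' (gibbs_pos hρ x).ne', Real.log_div h0.ne' (hρ x).ne', hg,
        Real.log_div (mul_pos (hρ x) (Real.exp_pos _)).ne' hZpos.ne',
        Real.log_mul (hρ x).ne' (Real.exp_pos _).ne', Real.log_exp]
      ring
  have hsum : ∑ x, π x * Real.log (π x / gibbs β ρ u x)
      = (∑ x, π x * Real.log (π x / ρ x)) + Real.log Z - β * ∑ x, π x * u x := by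
    rw [Finset.sum_congr rfl (fun x _ => key x), Finset.sum_sub_distrib,
      Finset.sum_add_distrib, ← Finset.sum_mul, hπ1, one_mul]
    congr 1
    rw [Finset.mul_sum]
    exact Finset.sum_congr rfl fun x _ => by ring
  rw [hsum]
  set K1 := ∑ x, π x * Real.log (π x / ρ x)
  set Su := ∑ x, π x * u x
  field_simp
  ring

omit [Nonempty X] hρ in
lemma kl_self_eq_zero {g : X → ℝ} (hg : ∀ x, 0 < g x) :
    ∑ x, g x * Real.log (g x / g x) = 0 := by
  apply Finset.sum_eq_zero; intro x _
  rw [div_self (hg x).ne', Real.log_one, mul_zero]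

end gibbs
end klsec

section part2
variable {X : Type*} [Fintype X]

lemma le_one_of_mem_simplex {p : X → ℝ} (hp : p ∈ simplex X) (x : X) : p x ≤ 1 := by
  obtain ⟨h0, h1⟩ := hp
  calc p x ≤ ∑ y, p y := Finset.single_le_sum (fun y _ => h0 y) (Finset.mem_univ x)
    _ = 1 := h1

lemma isCompact_simplex : IsCompact (simplex X) := by
  have hclosed : IsClosed (simplex X) := by
    have h1 : IsClosed {p : X → ℝ | ∀ x, 0 ≤ p x} := by
      have : {p : X → ℝ | ∀ x, 0 ≤ p x} = ⋂ x, {p : X → ℝ | 0 ≤ p x} := by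
        ext p; simp
      rw [this]
      exact isClosed_iInter fun x => isClosed_le continuous_const (continuous_apply x)
    have h2 : IsClosed {p : X → ℝ | ∑ x, p x = 1} :=
      isClosed_eq (by continuity) continuous_const
    exact (h1.inter h2 : _)
  refine IsCompact.of_isClosed_subset
    (isCompact_univ_pi fun _ => isCompact_Icc (a := (0:ℝ)) (b := 1)) hclosed ?_
  intro p hp
  simp only [Set.mem_univ_pi, Set.mem_Icc]
  exact fun x => ⟨hp.1 x, le_one_of_mem_simplex hp x⟩

lemma mul_log_div_eq (c : ℝ) (hc : 0 < c) {y : ℝ} (hy : 0 ≤ y) :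
    y * Real.log (y / c) = y * Real.log y - y * Real.log c := by
  rcases eq_or_lt_of_le hy with h0 | h0
  · simp [← h0]
  · rw [Real.log_div h0.ne' hc.ne']; ring

lemma mul_log_div_combo {t a b c : ℝ} (ht0 : 0 ≤ t) (ht1 : t ≤ 1) (ha : 0 ≤ a)
    (hb : 0 ≤ b) (hc : 0 < c) :
    ((1-t)*a + t*b) * Real.log (((1-t)*a + t*b)/c)
      ≤ (1-t)*(a*Real.log (a/c)) + t*(b*Real.log (b/c)) := by
  have hcomb : 0 ≤ (1-t)*a + t*b := by nlinarith
  have hcv := Real.convexOn_mul_log.2 (Set.mem_Ici.2 ha) (Set.mem_Ici.2 hb)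
    (by linarith : (0:ℝ) ≤ 1 - t) ht0 (by ring)
  simp only [smul_eq_mul] at hcv
  rw [mul_log_div_eq c hc hcomb, mul_log_div_eq c hc ha, mul_log_div_eq c hc hb]
  nlinarith [hcv]

lemma exp_sub_one_sub_le {y : ℝ} (hy : |y| ≤ 1) : Real.exp y - 1 - y ≤ y^2 := by
  have h := Real.exp_bound hy (by norm_num : 0 < 2)
  simp only [Finset.sum_range_succ, Finset.sum_range_zero] at h
  norm_num at h
  have h2 : |y|^2 = y^2 := sq_abs y
  cases abs_le.1 h with
  | intro hl hr => nlinarith [sq_abs y]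

end part2

section loggibbs
variable {X : Type*} [Fintype X] [Nonempty X] {β : ℝ} {ρ u : X → ℝ}

lemma log_gibbs (hρ : ∀ x, 0 < ρ x) (x : X) :
    Real.log (gibbs β ρ u x)
      = Real.log (ρ x) + β * u x - Real.log (∑ y, ρ y * Real.exp (β * u y)) := by
  unfold gibbs
  rw [Real.log_div (mul_pos (hρ x) (Real.exp_pos _)).ne' (gibbsZ_pos hρ).ne',
    Real.log_mul (hρ x).ne' (Real.exp_pos _).ne', Real.log_exp]

end loggibbs

set_option maxHeartbeats 2000000 in
/-- (Lemma 1) For `β_pl > 0` and `β_op ≠ 0`, the player's and opponent's soft Bellman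
operators coincide: `sup_π ext_σ f = ext_σ sup_π f` for every `V` and every state `s`. -/
theorem Bpl_eq_Bop [Nonempty S] [Nonempty A] [Nonempty B]
    (R : S → A → B → ℝ) (T : S → A → B → S → ℝ) (γ : ℝ) (hγ0 : 0 ≤ γ) (hγ1 : γ < 1)
    (hT0 : ∀ s a b s', 0 ≤ T s a b s') (hT1 : ∀ s a b, ∑ s', T s a b s' = 1)
    (ρpl : S → A → ℝ) (ρop : S → B → ℝ)
    (hρpl : ∀ s a, 0 < ρpl s a) (hρpl1 : ∀ s, ∑ a, ρpl s a = 1)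
    (hρop : ∀ s b, 0 < ρop s b) (hρop1 : ∀ s, ∑ b, ρop s b = 1)
    (βpl βop : ℝ) (hβpl : 0 < βpl) (hβop : βop ≠ 0) (V : S → ℝ) (s : S) :
    Bpl R T γ ρpl ρop βpl βop V s = Bop R T γ ρpl ρop βpl βop V s := by
  classical
  set Q : A → B → ℝ := fun a b => R s a b + γ * ∑ s', T s a b s' * V s' with hQ
  set f : (A → ℝ) → (B → ℝ) → ℝ :=
    fun π σ => freeEnergy R T γ ρpl ρop βpl βop π σ s V with hf
  set M : (B → ℝ) → A → ℝ := fun σ a => ∑ b, σ b * Q a b with hM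
  set L : (A → ℝ) → B → ℝ := fun π b => ∑ a, π a * Q a b with hL
  set KLpl : (A → ℝ) → ℝ := fun π => ∑ a, π a * Real.log (π a / ρpl s a) with hKLpl
  set KLop : (B → ℝ) → ℝ := fun σ => ∑ b, σ b * Real.log (σ b / ρop s b) with hKLop
  set F : (B → ℝ) → ℝ := fun σ =>
    (1/βpl) * Real.log (∑ a, ρpl s a * Real.exp (βpl * M σ a)) - (1/βop) * KLop σ with hF
  set G : (A → ℝ) → ℝ := fun π =>
    (1/βop) * Real.log (∑ b, ρop s b * Real.exp (βop * L π b)) - (1/βpl) * KLpl π with hG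
  -- two ways to rewrite f
  have h_f_pl : ∀ π σ, f π σ = ((∑ a, π a * M σ a) - (1/βpl) * KLpl π) - (1/βop) * KLop σ := by
    intro π σ
    show freeEnergy R T γ ρpl ρop βpl βop π σ s V = _
    rw [freeEnergy]
    have : (∑ a, ∑ b, π a * σ b * (R s a b + γ * ∑ s', T s a b s' * V s'))
        = ∑ a, π a * M σ a := by
      simp only [hM, hQ, Finset.mul_sum, mul_assoc]
    rw [this]; try ring
  have h_f_op : ∀ π σ, f π σ = ((∑ b, σ b * L π b) - (1/βop) * KLop σ) - (1/βpl) * KLpl π := by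
    intro π σ
    rw [h_f_pl π σ]
    have : ∑ a, π a * M σ a = ∑ b, σ b * L π b := by
      rw [hM, hL]
      simp_rw [Finset.mul_sum]
      rw [Finset.sum_comm]
      exact Finset.sum_congr rfl fun b _ => Finset.sum_congr rfl fun a _ => by ring
    rw [this]; try ring
  -- the two key Gibbs identities
  have idF : ∀ σ, ∀ π ∈ simplex A,
      f π σ = F σ - (1/βpl) * ∑ a, π a * Real.log (π a / gibbs βpl (ρpl s) (M σ) a) := by
    intro σ π hπ
    have := gibbs_identity (ρ := ρpl s) (u := M σ) (hρpl s) hβpl.ne' hπ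
    rw [h_f_pl π σ]
    simp only [hF, hKLpl] at this ⊢
    linarith
  have idG : ∀ π, ∀ σ ∈ simplex B,
      f π σ = G π - (1/βop) * ∑ b, σ b * Real.log (σ b / gibbs βop (ρop s) (L π) b) := by
    intro π σ hσ
    have := gibbs_identity (ρ := ρop s) (u := L π) (hρop s) hβop hσ
    rw [h_f_op π σ]
    simp only [hG, hKLop] at this ⊢
    linarith
  -- values at the Gibbs points
  have valF : ∀ σ, f (gibbs βpl (ρpl s) (M σ)) σ = F σ := by
    intro σ
    rw [idF σ _ (gibbs_mem_simplex (hρpl s)), kl_self_eq_zero (gibbs_pos (hρpl s)),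
      mul_zero, sub_zero]
  have valG : ∀ π, f π (gibbs βop (ρop s) (L π)) = G π := by
    intro π
    rw [idG π _ (gibbs_mem_simplex (hρop s)), kl_self_eq_zero (gibbs_pos (hρop s)),
      mul_zero, sub_zero]
  -- F σ is the greatest value of f · σ
  have hFgr : ∀ σ ∈ simplex B, IsGreatest ((fun π => f π σ) '' simplex A) (F σ) := by
    intro σ _
    constructor
    · exact ⟨gibbs βpl (ρpl s) (M σ), gibbs_mem_simplex (hρpl s), valF σ⟩
    · rintro v ⟨π, hπ, rfl⟩
      show f π σ ≤ F σ
      rw [idF σ π hπ]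
      have hkl : 0 ≤ ∑ a, π a * Real.log (π a / gibbs βpl (ρpl s) (M σ) a) :=
        kl_nonneg _ _ hπ.1 (gibbs_pos (hρpl s))
          (by rw [hπ.2, gibbs_sum_one (hρpl s)])
      have h1β : 0 < 1/βpl := by positivity
      nlinarith
  have hGkl : ∀ π, ∀ σ ∈ simplex B,
      0 ≤ ∑ b, σ b * Real.log (σ b / gibbs βop (ρop s) (L π) b) := by
    intro π σ hσ
    exact kl_nonneg _ _ hσ.1 (gibbs_pos (hρop s)) (by rw [hσ.2, gibbs_sum_one (hρop s)])

  have hGub : 0 < βop → ∀ π, ∀ σ ∈ simplex B, f π σ ≤ G π := by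
    intro hpos π σ hσ
    rw [idG π σ hσ]
    have := hGkl π σ hσ
    have h1β : 0 < 1/βop := by positivity
    nlinarith
  have hGlb : βop < 0 → ∀ π, ∀ σ ∈ simplex B, G π ≤ f π σ := by
    intro hneg π σ hσ
    rw [idG π σ hσ]
    have := hGkl π σ hσ
    have h1β : 1/βop < 0 := by exact div_neg_of_pos_of_neg one_pos hneg
    nlinarith
  have hρopS : ρop s ∈ simplex B := ⟨fun b => (hρop s b).le, hρop1 s⟩
  have hρplS : ρpl s ∈ simplex A := ⟨fun a => (hρpl s a).le, hρpl1 s⟩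
  rcases lt_or_gt_of_ne hβop with hneg | hpos
  · -- β_op < 0 : genuine minimax
    have hnotpos : ¬ 0 < βop := not_lt.2 hneg.le
    have hGle : ∀ π ∈ simplex A, IsLeast ((fun σ => f π σ) '' simplex B) (G π) := by
      intro π hπ
      exact ⟨⟨gibbs βop (ρop s) (L π), gibbs_mem_simplex (hρop s), valG π⟩,
        by rintro v ⟨σ, hσ, rfl⟩; exact hGlb hneg π σ hσ⟩
    -- continuity of F and existence of a minimizer
    have hMcont : ∀ a, Continuous fun σ : B → ℝ => M σ a := by
      intro a
      simp only [hM]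
      exact continuous_finset_sum _ fun b _ => (continuous_apply b).mul continuous_const
    have hZcont : Continuous fun σ : B → ℝ => ∑ a, ρpl s a * Real.exp (βpl * M σ a) :=
      continuous_finset_sum _ fun a _ => continuous_const.mul
        (Real.continuous_exp.comp (continuous_const.mul (hMcont a)))
    have hZpos' : ∀ σ : B → ℝ, 0 < ∑ a, ρpl s a * Real.exp (βpl * M σ a) := fun σ =>
      gibbsZ_pos (β := βpl) (u := M σ) (hρpl s)
    have hKLopcont : Continuous KLop := by
      rw [hKLop]
      refine continuous_finset_sum _ fun b _ => ?_
      have heq : (fun σ : B → ℝ => σ b * Real.log (σ b / ρop s b))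
          = fun σ : B → ℝ => σ b * Real.log (σ b) - σ b * Real.log (ρop s b) := by
        funext σ
        rcases eq_or_ne (σ b) 0 with h0 | h0
        · simp [h0]
        · rw [Real.log_div h0 (hρop s b).ne']; ring
      rw [heq]
      exact (Real.continuous_mul_log.comp (continuous_apply b)).sub
        ((continuous_apply b).mul continuous_const)
    have hFcont : Continuous F := by
      rw [hF]
      refine Continuous.sub (continuous_const.mul ?_) (continuous_const.mul hKLopcont)
      refine continuous_iff_continuousAt.2 fun σ => ?_
      exact ContinuousAt.log hZcont.continuousAt (hZpos' σ).ne'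
    obtain ⟨σst, hσstS, hσstmin⟩ :=
      isCompact_simplex.exists_isMinOn ⟨ρop s, hρopS⟩ hFcont.continuousOn
    set πst := gibbs βpl (ρpl s) (M σst) with hπst
    have hπstS : πst ∈ simplex A := gibbs_mem_simplex (hρpl s)
    have hπstpos : ∀ a, 0 < πst a := gibbs_pos (hρpl s)
    set σhat := gibbs βop (ρop s) (L πst) with hσhat
    have hσhatS : σhat ∈ simplex B := gibbs_mem_simplex (hρop s)
    have hσhatpos : ∀ b, 0 < σhat b := gibbs_pos (hρop s)
    set δ := ∑ b, σst b * Real.log (σst b / σhat b) with hδ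
    have hδ0 : 0 ≤ δ := by
      rw [hδ, hσhat]; exact hGkl πst σst hσstS
    have hFval : F σst = f πst σst := by
      have h := idF σst πst hπstS
      rw [← hπst] at h
      rw [h, kl_self_eq_zero hπstpos, mul_zero, sub_zero]
    have hkey : δ ≤ 0 := by
      by_contra hcon
      push_neg at hcon
      set c := -(1/βop) with hc
      have hcpos : 0 < c := by
        have := div_neg_of_pos_of_neg one_pos hneg
        rw [hc]; linarith
      set d : A → ℝ := fun a => M σhat a - M σst a with hd
      set xx : A → ℝ := fun a => βpl * d a with hxx
      set K := ∑ a, (xx a)^2 with hK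
      have hK0 : 0 ≤ K := Finset.sum_nonneg fun a _ => sq_nonneg _
      set Cx := ∑ a, |xx a| with hCx
      have hCx0 : 0 ≤ Cx := Finset.sum_nonneg fun a _ => abs_nonneg _
      have hCxa : ∀ a, |xx a| ≤ Cx := fun a =>
        Finset.single_le_sum (f := fun a => |xx a|) (fun i _ => abs_nonneg _)
          (Finset.mem_univ a)
      have hcδ : 0 < c * δ := mul_pos hcpos hcon
      set t := min (1/(1+Cx)) (βpl * (c*δ) / (2*K+1)) with ht
      have ht0 : 0 < t := lt_min (by positivity) (by positivity)
      have ht1 : t ≤ 1 := by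
        refine (min_le_left _ _).trans ?_
        rw [div_le_one (by linarith)]
        linarith
      have htx : ∀ a, |t * xx a| ≤ 1 := by
        intro a
        rw [abs_mul, abs_of_pos ht0]
        have h1 : t ≤ 1/(1+Cx) := min_le_left _ _
        have h2 : |xx a| ≤ 1 + Cx := by linarith [hCxa a]
        calc t * |xx a| ≤ (1/(1+Cx)) * (1+Cx) :=
              mul_le_mul h1 h2 (abs_nonneg _) (by positivity)
          _ = 1 := by field_simp
      set σt : B → ℝ := fun b => (1-t) * σst b + t * σhat b with hσt
      have hσtS : σt ∈ simplex B := by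
        constructor
        · intro b
          have h1 := hσstS.1 b
          have h2 := (hσhatpos b).le
          have : (0:ℝ) ≤ 1 - t := by linarith
          simp only [hσt]
          nlinarith
        · simp only [hσt]
          rw [Finset.sum_add_distrib, ← Finset.mul_sum, ← Finset.mul_sum,
            hσstS.2, hσhatS.2]
          ring
      -- (E1) going towards σhat decreases f πst linearly
      have hKLt : ∑ b, σt b * Real.log (σt b / σhat b) ≤ (1-t) * δ := by
        rw [hδ, Finset.mul_sum]
        refine Finset.sum_le_sum fun b _ => ?_
        have h := mul_log_div_combo ht0.le ht1 (hσstS.1 b) (hσhatpos b).le (hσhatpos b)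
        rw [div_self (hσhatpos b).ne', Real.log_one, mul_zero, mul_zero, add_zero] at h
        simp only [hσt]
        exact h
      have hE1 : f πst σt ≤ f πst σst - t * (c * δ) := by
        have h1 := idG πst σt hσtS
        rw [← hσhat] at h1
        have h2 := idG πst σst hσstS
        rw [← hσhat, ← hδ] at h2
        have h3 : c * (∑ b, σt b * Real.log (σt b / σhat b)) ≤ c * ((1-t)*δ) :=
          mul_le_mul_of_nonneg_left hKLt hcpos.le
        have hc' : (1/βop : ℝ) = -c := by rw [hc]; ring
        rw [h1, h2, hc']
        nlinarith [h3]
      -- (E2) quadratic bound on the Danskin error term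
      have hMt : ∀ a, M σt a = M σst a + t * d a := by
        intro a
        simp only [hd]
        have h1 : M σt a = ∑ b, ((1-t) * σst b + t * σhat b) * Q a b := by
          simp only [hM, hσt]
        rw [h1]
        have h2 : ∀ b, ((1-t) * σst b + t * σhat b) * Q a b
            = (1-t)*(σst b * Q a b) + t*(σhat b * Q a b) := fun b => by ring
        rw [Finset.sum_congr rfl fun b _ => h2 b, Finset.sum_add_distrib,
          ← Finset.mul_sum, ← Finset.mul_sum]
        show (1-t) * M σst a + t * M σhat a = _
        ring
      set Z0 := ∑ a, ρpl s a * Real.exp (βpl * M σst a) with hZ0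
      set Zt := ∑ a, ρpl s a * Real.exp (βpl * M σt a) with hZt
      have hZ0pos : 0 < Z0 := gibbsZ_pos (β := βpl) (u := M σst) (hρpl s)
      have hZtpos : 0 < Zt := gibbsZ_pos (β := βpl) (u := M σt) (hρpl s)
      have hπstZ : ∀ a, πst a * Z0 = ρpl s a * Real.exp (βpl * M σst a) := by
        intro a
        rw [hπst]
        exact div_mul_cancel₀ _ hZ0pos.ne'
      set Et := ∑ a, πst a * Real.exp (t * xx a) with hEt
      have hEtpos : 0 < Et :=
        Finset.sum_pos (fun a _ => mul_pos (hπstpos a) (Real.exp_pos _))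
          Finset.univ_nonempty
      have hZtEt : Zt = Z0 * Et := by
        rw [hZt, hEt, Finset.mul_sum]
        refine Finset.sum_congr rfl fun a _ => ?_
        calc ρpl s a * Real.exp (βpl * M σt a)
            = (ρpl s a * Real.exp (βpl * M σst a)) * Real.exp (t * xx a) := by
              rw [hMt a, mul_add, Real.exp_add]
              have : βpl * (t * d a) = t * xx a := by simp only [hxx]; ring
              rw [this]; ring
          _ = (πst a * Z0) * Real.exp (t * xx a) := by rw [hπstZ a]
          _ = Z0 * (πst a * Real.exp (t * xx a)) := by ring
      have hterm : ∀ a, πst a * Real.log (πst a / gibbs βpl (ρpl s) (M σt) a)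
          = πst a * (Real.log Et - t * xx a) := by
        intro a
        rw [Real.log_div (hπstpos a).ne' (gibbs_pos (hρpl s) a).ne']
        have hl1 : Real.log (πst a)
            = Real.log (ρpl s a) + βpl * M σst a - Real.log Z0 := by
          rw [hπst, log_gibbs (hρpl s) a, ← hZ0]
        have hl2 : Real.log (gibbs βpl (ρpl s) (M σt) a)
            = Real.log (ρpl s a) + βpl * M σt a - Real.log Zt := by
          rw [log_gibbs (hρpl s) a, ← hZt]
        rw [hl1, hl2, hZtEt, Real.log_mul hZ0pos.ne' hEtpos.ne', hMt a]
        have : t * xx a = βpl * (t * d a) := by simp only [hxx]; ring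
        rw [this]; ring
      have hDt : ∑ a, πst a * Real.log (πst a / gibbs βpl (ρpl s) (M σt) a)
          ≤ t^2 * K := by
        rw [Finset.sum_congr rfl fun a _ => hterm a]
        have hsplit : ∑ a, πst a * (Real.log Et - t * xx a)
            = Real.log Et - t * ∑ a, πst a * xx a := by
          have h2 : ∀ a, πst a * (Real.log Et - t * xx a)
              = πst a * Real.log Et - t * (πst a * xx a) := fun a => by ring
          rw [Finset.sum_congr rfl fun a _ => h2 a, Finset.sum_sub_distrib,
            ← Finset.sum_mul, hπstS.2, one_mul, ← Finset.mul_sum]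
        rw [hsplit]
        have hlogEt : Real.log Et ≤ Et - 1 := Real.log_le_sub_one_of_pos hEtpos
        have hEtsum : Et - 1 - t * ∑ a, πst a * xx a
            = ∑ a, πst a * (Real.exp (t * xx a) - 1 - t * xx a) := by
          have h2 : ∀ a, πst a * (Real.exp (t * xx a) - 1 - t * xx a)
              = πst a * Real.exp (t * xx a) - πst a - t * (πst a * xx a) :=
            fun a => by ring
          rw [Finset.sum_congr rfl fun a _ => h2 a, Finset.sum_sub_distrib,
            Finset.sum_sub_distrib, hπstS.2, ← Finset.mul_sum, ← hEt]
        have hbound : ∀ a, πst a * (Real.exp (t * xx a) - 1 - t * xx a)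
            ≤ (t * xx a)^2 := by
          intro a
          have h1 : Real.exp (t * xx a) - 1 - (t * xx a) ≤ (t * xx a)^2 :=
            exp_sub_one_sub_le (htx a)
          have h2 : 0 ≤ Real.exp (t * xx a) - 1 - (t * xx a) := by
            nlinarith [Real.add_one_le_exp (t * xx a)]
          calc πst a * (Real.exp (t * xx a) - 1 - t * xx a)
              ≤ 1 * (t * xx a)^2 :=
                mul_le_mul (le_one_of_mem_simplex hπstS a) h1 h2 zero_le_one
            _ = (t * xx a)^2 := one_mul _
        calc Real.log Et - t * ∑ a, πst a * xx a
            ≤ Et - 1 - t * ∑ a, πst a * xx a := by linarith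
          _ = ∑ a, πst a * (Real.exp (t * xx a) - 1 - t * xx a) := hEtsum
          _ ≤ ∑ a, (t * xx a)^2 := Finset.sum_le_sum fun a _ => hbound a
          _ = t^2 * K := by
              rw [hK, Finset.mul_sum]
              exact Finset.sum_congr rfl fun a _ => by rw [mul_pow]
      -- combine
      have hF_t : F σt = f πst σt
          + (1/βpl) * ∑ a, πst a * Real.log (πst a / gibbs βpl (ρpl s) (M σt) a) := by
        have h := idF σt πst hπstS
        linarith
      have hmin : F σst ≤ F σt := hσstmin hσtS
      have h1βpl : 0 < 1/βpl := by positivity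
      have hfinal : t * (c*δ) ≤ (1/βpl) * (t^2 * K) := by
        have h4 : (1/βpl) * ∑ a, πst a * Real.log (πst a / gibbs βpl (ρpl s) (M σt) a)
            ≤ (1/βpl) * (t^2 * K) := mul_le_mul_of_nonneg_left hDt h1βpl.le
        have e1 : F σst ≤ f πst σst - t * (c*δ) + (1/βpl) * (t^2 * K) := by
          calc F σst ≤ F σt := hmin
            _ = f πst σt
                + (1/βpl) * ∑ a, πst a * Real.log (πst a / gibbs βpl (ρpl s) (M σt) a) :=
              hF_t
            _ ≤ f πst σst - t * (c*δ) + (1/βpl) * (t^2 * K) := add_le_add hE1 h4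
        rw [hFval] at e1
        linarith
      have ht2 : t ≤ βpl * (c*δ)/(2*K+1) := min_le_right _ _
      have hstep : (1/βpl)*(t^2*K) ≤ t*(K*(c*δ)/(2*K+1)) := by
        have hnn : 0 ≤ t*K/βpl := by positivity
        calc (1/βpl)*(t^2*K) = (t*K/βpl)*t := by ring
          _ ≤ (t*K/βpl)*(βpl*(c*δ)/(2*K+1)) := mul_le_mul_of_nonneg_left ht2 hnn
          _ = t*(K*(c*δ)/(2*K+1)) := by
              field_simp
      have h5 : c*δ ≤ K*(c*δ)/(2*K+1) := by
        have h6 : t*(c*δ) ≤ t*(K*(c*δ)/(2*K+1)) := le_trans hfinal hstep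
        exact le_of_mul_le_mul_left h6 ht0
      have h7 : K*(c*δ)/(2*K+1) < c*δ := by
        rw [div_lt_iff₀ (by linarith : (0:ℝ) < 2*K+1)]
        nlinarith
      linarith
    have hδeq : δ = 0 := le_antisymm hkey hδ0
    have hGπst : G πst = f πst σst := by
      have h := idG πst σst hσstS
      rw [← hσhat, ← hδ, hδeq, mul_zero, sub_zero] at h
      exact h.symm
    have hFub : ∀ π ∈ simplex A, G π ≤ F σst := fun π hπ =>
      (hGlb hneg π σst hσstS).trans ((hFgr σst hσstS).2 ⟨π, hπ, rfl⟩)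
    have hBopval : sInf (F '' simplex B) = F σst :=
      IsLeast.csInf_eq ⟨⟨σst, hσstS, rfl⟩, by rintro y ⟨σ, hσ, rfl⟩; exact hσstmin hσ⟩
    have hchange : Bpl R T γ ρpl ρop βpl βop V s
        = sSup ((fun π => extOp βop (fun σ => f π σ)) '' simplex A) := rfl
    have hchange2 : Bop R T γ ρpl ρop βpl βop V s
        = extOp βop (fun σ => sSup ((fun π => f π σ) '' simplex A)) := rfl
    rw [hchange, hchange2, extOp, if_neg hnotpos]
    have himg1 : ((fun π => extOp βop (fun σ => f π σ)) '' simplex A) = G '' simplex A :=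
      Set.image_congr fun π hπ => by
        rw [extOp, if_neg hnotpos, (hGle π hπ).csInf_eq]
    have himg2 : ((fun σ => sSup ((fun π => f π σ) '' simplex A)) '' simplex B)
        = F '' simplex B :=
      Set.image_congr fun σ hσ => (hFgr σ hσ).csSup_eq
    rw [himg1, himg2, hBopval]
    apply le_antisymm
    · refine csSup_le ⟨G πst, ⟨πst, hπstS, rfl⟩⟩ ?_
      rintro y ⟨π, hπ, rfl⟩
      exact hFub π hπ
    · have hFG : F σst = G πst := by rw [hGπst, hFval]
      rw [hFG]
      refine le_csSup ⟨F σst, ?_⟩ ⟨πst, hπstS, rfl⟩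
      rintro y ⟨π, hπ, rfl⟩
      exact hFub π hπ
  · -- β_op > 0 : both sides are iterated suprema
    have hGgr : ∀ π ∈ simplex A, IsGreatest ((fun σ => f π σ) '' simplex B) (G π) := by
      intro π hπ
      exact ⟨⟨gibbs βop (ρop s) (L π), gibbs_mem_simplex (hρop s), valG π⟩,
        by rintro v ⟨σ, hσ, rfl⟩; exact hGub hpos π σ hσ⟩
    set CQ := ∑ a, ∑ b, |Q a b| with hCQ
    have hfCQ : ∀ π ∈ simplex A, ∀ σ ∈ simplex B, f π σ ≤ CQ := by
      intro π hπ σ hσ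
      rw [h_f_pl π σ]
      have hklpl : 0 ≤ KLpl π := by
        rw [hKLpl]
        exact kl_nonneg _ _ hπ.1 (hρpl s) (by rw [hπ.2, hρpl1 s])
      have hklop : 0 ≤ KLop σ := by
        rw [hKLop]
        exact kl_nonneg _ _ hσ.1 (hρop s) (by rw [hσ.2, hρop1 s])
      have h1 : ∀ a, π a * M σ a ≤ ∑ b, |Q a b| := by
        intro a
        have hM1 : M σ a ≤ ∑ b, |Q a b| := by
          rw [hM]
          refine Finset.sum_le_sum fun b _ => ?_
          calc σ b * Q a b ≤ σ b * |Q a b| :=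
                mul_le_mul_of_nonneg_left (le_abs_self _) (hσ.1 b)
            _ ≤ 1 * |Q a b| :=
                mul_le_mul_of_nonneg_right (le_one_of_mem_simplex hσ b) (abs_nonneg _)
            _ = |Q a b| := one_mul _
        have habs : (0:ℝ) ≤ ∑ b, |Q a b| := Finset.sum_nonneg fun b _ => abs_nonneg _
        calc π a * M σ a ≤ π a * ∑ b, |Q a b| :=
              mul_le_mul_of_nonneg_left hM1 (hπ.1 a)
          _ ≤ 1 * ∑ b, |Q a b| :=
              mul_le_mul_of_nonneg_right (le_one_of_mem_simplex hπ a) habs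
          _ = ∑ b, |Q a b| := one_mul _
      have hsum : ∑ a, π a * M σ a ≤ CQ := by
        rw [hCQ]; exact Finset.sum_le_sum fun a _ => h1 a
      have h1βpl : 0 < 1/βpl := by positivity
      have h1βop : 0 < 1/βop := by positivity
      nlinarith
    have hFCQ : ∀ σ ∈ simplex B, F σ ≤ CQ := fun σ hσ => by
      rw [← valF σ]; exact hfCQ _ (gibbs_mem_simplex (hρpl s)) σ hσ
    have hGCQ : ∀ π ∈ simplex A, G π ≤ CQ := fun π hπ => by
      rw [← valG π]; exact hfCQ π hπ _ (gibbs_mem_simplex (hρop s))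
    have hbddF : BddAbove (F '' simplex B) := by
      refine ⟨CQ, ?_⟩; rintro y ⟨σ, hσ, rfl⟩; exact hFCQ σ hσ
    have hbddG : BddAbove (G '' simplex A) := by
      refine ⟨CQ, ?_⟩; rintro y ⟨π, hπ, rfl⟩; exact hGCQ π hπ
    have hchange : Bpl R T γ ρpl ρop βpl βop V s
        = sSup ((fun π => extOp βop (fun σ => f π σ)) '' simplex A) := rfl
    have hchange2 : Bop R T γ ρpl ρop βpl βop V s
        = extOp βop (fun σ => sSup ((fun π => f π σ) '' simplex A)) := rfl
    rw [hchange, hchange2, extOp, if_pos hpos]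
    have himg1 : ((fun π => extOp βop (fun σ => f π σ)) '' simplex A) = G '' simplex A :=
      Set.image_congr fun π hπ => by
        rw [extOp, if_pos hpos, (hGgr π hπ).csSup_eq]
    have himg2 : ((fun σ => sSup ((fun π => f π σ) '' simplex A)) '' simplex B)
        = F '' simplex B :=
      Set.image_congr fun σ hσ => (hFgr σ hσ).csSup_eq
    rw [himg1, himg2]
    apply le_antisymm
    · refine csSup_le ⟨G (ρpl s), ⟨ρpl s, hρplS, rfl⟩⟩ ?_
      rintro y ⟨π, hπ, rfl⟩
      calc G π = f π (gibbs βop (ρop s) (L π)) := (valG π).symm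
        _ ≤ F (gibbs βop (ρop s) (L π)) :=
            (hFgr _ (gibbs_mem_simplex (hρop s))).2 ⟨π, hπ, rfl⟩
        _ ≤ sSup (F '' simplex B) :=
            le_csSup hbddF ⟨_, gibbs_mem_simplex (hρop s), rfl⟩
    · refine csSup_le ⟨F (ρop s), ⟨ρop s, hρopS, rfl⟩⟩ ?_
      rintro y ⟨σ, hσ, rfl⟩
      calc F σ = f (gibbs βpl (ρpl s) (M σ)) σ := (valF σ).symm
        _ ≤ G (gibbs βpl (ρpl s) (M σ)) :=
            (hGgr _ (gibbs_mem_simplex (hρpl s))).2 ⟨σ, hσ, rfl⟩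
        _ ≤ sSup (G '' simplex A) :=
            le_csSup hbddG ⟨_, gibbs_mem_simplex (hρpl s), rfl⟩
end
end

section
/- (Theorem 1, Contraction) Assume β_pl ≠ 0 and β_op ≠ 0. For all V, V̄ : S → ℝ, max_{s∈S} |(B_pl V)(s) − (B_pl V̄)(s)| ≤ γ · max_{s∈S} |V(s) − V̄(s)|; that is, the soft Bellman operator B_pl is a γ-contraction in the sup norm on ℝ^S. -/
noncomputable section

variable {S A B : Type*} [Fintype S] [Fintype A] [Fintype B]

lemma abs_sSup_sub_sSup_le {X : Type*} {s : Set X} (hs : s.Nonempty) {g h : X → ℝ} {c : ℝ}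
    (hg : BddAbove (g '' s)) (hh : BddAbove (h '' s))
    (hd : ∀ p ∈ s, |g p - h p| ≤ c) : |sSup (g '' s) - sSup (h '' s)| ≤ c := by
  rw [abs_sub_le_iff]
  constructor
  · rw [sub_le_iff_le_add]
    apply csSup_le (hs.image _)
    rintro _ ⟨p, hp, rfl⟩
    have h1 := (abs_sub_le_iff.1 (hd p hp)).1
    have h2 := le_csSup hh (Set.mem_image_of_mem h hp)
    linarith
  · rw [sub_le_iff_le_add]
    apply csSup_le (hs.image _)
    rintro _ ⟨p, hp, rfl⟩
    have h1 := (abs_sub_le_iff.1 (hd p hp)).2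
    have h2 := le_csSup hg (Set.mem_image_of_mem g hp)
    linarith

lemma abs_sInf_sub_sInf_le {X : Type*} {s : Set X} (hs : s.Nonempty) {g h : X → ℝ} {c : ℝ}
    (hg : BddBelow (g '' s)) (hh : BddBelow (h '' s))
    (hd : ∀ p ∈ s, |g p - h p| ≤ c) : |sInf (g '' s) - sInf (h '' s)| ≤ c := by
  rw [abs_sub_le_iff]
  constructor
  · have : sInf (g '' s) - c ≤ sInf (h '' s) := by
      apply le_csInf (hs.image _)
      rintro _ ⟨p, hp, rfl⟩
      have h1 := (abs_sub_le_iff.1 (hd p hp)).1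
      have h2 := csInf_le hg (Set.mem_image_of_mem g hp)
      linarith
    linarith
  · have : sInf (h '' s) - c ≤ sInf (g '' s) := by
      apply le_csInf (hs.image _)
      rintro _ ⟨p, hp, rfl⟩
      have h1 := (abs_sub_le_iff.1 (hd p hp)).2
      have h2 := csInf_le hh (Set.mem_image_of_mem h hp)
      linarith
    linarith

lemma entropy_term_bound {p c : ℝ} (hp0 : 0 ≤ p) (hp1 : p ≤ 1) (hc : 0 < c) :
    |p * Real.log (p / c)| ≤ 1 + |Real.log c| := by
  rcases eq_or_lt_of_le hp0 with h | h
  · simp [← h]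
    positivity
  · rw [Real.log_div (ne_of_gt h) (ne_of_gt hc), mul_sub]
    calc |p * Real.log p - p * Real.log c| ≤ |p * Real.log p| + |p * Real.log c| :=
          abs_sub _ _
      _ ≤ 1 + |Real.log c| := by
          have h1 : |p * Real.log p| ≤ 1 := by
            rw [mul_comm]; exact (Real.abs_log_mul_self_lt p h hp1).le
          have h2 : |p * Real.log c| ≤ |Real.log c| := by
            rw [abs_mul, abs_of_nonneg hp0]
            nlinarith [abs_nonneg (Real.log c)]
          linarith

lemma simplex_le_one {X : Type*} [Fintype X] {p : X → ℝ} (hp : p ∈ simplex X) (x : X) :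
    p x ≤ 1 :=
  hp.2 ▸ Finset.single_le_sum (fun i _ => hp.1 i) (Finset.mem_univ x)

/-- Uniform bound for the free energy on the product of simplexes. -/
lemma freeEnergy_abs_bound (R : S → A → B → ℝ) (T : S → A → B → S → ℝ) (γ : ℝ)
    (ρpl : S → A → ℝ) (ρop : S → B → ℝ)
    (hρpl : ∀ s a, 0 < ρpl s a) (hρop : ∀ s b, 0 < ρop s b)
    (βpl βop : ℝ) (s : S) (V : S → ℝ) {π : A → ℝ} {σ : B → ℝ}
    (hπ : π ∈ simplex A) (hσ : σ ∈ simplex B) :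
    |freeEnergy R T γ ρpl ρop βpl βop π σ s V| ≤
      (∑ a, ∑ b, |R s a b + γ * ∑ s', T s a b s' * V s'|)
        + |1 / βpl| * (∑ a, (1 + |Real.log (ρpl s a)|))
        + |1 / βop| * (∑ b, (1 + |Real.log (ρop s b)|)) := by
  have t1 : |∑ a, ∑ b, π a * σ b * (R s a b + γ * ∑ s', T s a b s' * V s')| ≤
      ∑ a, ∑ b, |R s a b + γ * ∑ s', T s a b s' * V s'| := by
    refine (Finset.abs_sum_le_sum_abs _ _).trans (Finset.sum_le_sum fun a _ => ?_)
    refine (Finset.abs_sum_le_sum_abs _ _).trans (Finset.sum_le_sum fun b _ => ?_)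
    rw [abs_mul, abs_mul, abs_of_nonneg (hπ.1 a), abs_of_nonneg (hσ.1 b)]
    have hle : π a * σ b ≤ 1 :=
      mul_le_one₀ (simplex_le_one hπ a) (hσ.1 b) (simplex_le_one hσ b)
    have := mul_le_mul_of_nonneg_right hle
      (abs_nonneg (R s a b + γ * ∑ s', T s a b s' * V s'))
    linarith
  have t2 : |∑ a, π a * Real.log (π a / ρpl s a)| ≤ ∑ a, (1 + |Real.log (ρpl s a)|) :=
    (Finset.abs_sum_le_sum_abs _ _).trans (Finset.sum_le_sum fun a _ =>
      entropy_term_bound (hπ.1 a) (simplex_le_one hπ a) (hρpl s a))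
  have t3 : |∑ b, σ b * Real.log (σ b / ρop s b)| ≤ ∑ b, (1 + |Real.log (ρop s b)|) :=
    (Finset.abs_sum_le_sum_abs _ _).trans (Finset.sum_le_sum fun b _ =>
      entropy_term_bound (hσ.1 b) (simplex_le_one hσ b) (hρop s b))
  have key : |freeEnergy R T γ ρpl ρop βpl βop π σ s V| ≤
      |∑ a, ∑ b, π a * σ b * (R s a b + γ * ∑ s', T s a b s' * V s')|
        + |1 / βpl| * |∑ a, π a * Real.log (π a / ρpl s a)|
        + |1 / βop| * |∑ b, σ b * Real.log (σ b / ρop s b)| := by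
    unfold freeEnergy
    calc |_ - _ - _| ≤ |_ - _| + |(1 / βop) * ∑ b, σ b * Real.log (σ b / ρop s b)| :=
          abs_sub _ _
      _ ≤ _ := by
          rw [abs_mul]
          have := abs_sub (∑ a, ∑ b, π a * σ b * (R s a b + γ * ∑ s', T s a b s' * V s'))
            ((1 / βpl) * ∑ a, π a * Real.log (π a / ρpl s a))
          rw [abs_mul] at this
          linarith
  have m2 : |1 / βpl| * |∑ a, π a * Real.log (π a / ρpl s a)|
      ≤ |1 / βpl| * (∑ a, (1 + |Real.log (ρpl s a)|)) :=
    mul_le_mul_of_nonneg_left t2 (abs_nonneg _)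
  have m3 : |1 / βop| * |∑ b, σ b * Real.log (σ b / ρop s b)|
      ≤ |1 / βop| * (∑ b, (1 + |Real.log (ρop s b)|)) :=
    mul_le_mul_of_nonneg_left t3 (abs_nonneg _)
  linarith

/-- The free energy is `γ`-Lipschitz in `V` (sup norm). -/
lemma freeEnergy_diff_bound (R : S → A → B → ℝ) (T : S → A → B → S → ℝ) (γ : ℝ)
    (hγ0 : 0 ≤ γ) (hT0 : ∀ s a b s', 0 ≤ T s a b s') (hT1 : ∀ s a b, ∑ s', T s a b s' = 1)
    (ρpl : S → A → ℝ) (ρop : S → B → ℝ) (βpl βop : ℝ) (s : S) (V Vbar : S → ℝ)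
    {M : ℝ} (hM : ∀ s', |V s' - Vbar s'| ≤ M) {π : A → ℝ} {σ : B → ℝ}
    (hπ : π ∈ simplex A) (hσ : σ ∈ simplex B) :
    |freeEnergy R T γ ρpl ρop βpl βop π σ s V
      - freeEnergy R T γ ρpl ρop βpl βop π σ s Vbar| ≤ γ * M := by
  have key : freeEnergy R T γ ρpl ρop βpl βop π σ s V
      - freeEnergy R T γ ρpl ρop βpl βop π σ s Vbar
      = ∑ a, ∑ b, π a * σ b * (γ * ∑ s', T s a b s' * (V s' - Vbar s')) := by
    unfold freeEnergy
    have cancel : ∀ x y u v : ℝ, x - u - v - (y - u - v) = x - y := by intros; ring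
    rw [cancel]
    rw [← Finset.sum_sub_distrib]
    refine Finset.sum_congr rfl fun a _ => ?_
    rw [← Finset.sum_sub_distrib]
    refine Finset.sum_congr rfl fun b _ => ?_
    have : ∑ s', T s a b s' * (V s' - Vbar s')
        = (∑ s', T s a b s' * V s') - ∑ s', T s a b s' * Vbar s' := by
      rw [← Finset.sum_sub_distrib]
      exact Finset.sum_congr rfl fun s' _ => by ring
    rw [this]; ring
  rw [key]
  have step : ∀ a b, |π a * σ b * (γ * ∑ s', T s a b s' * (V s' - Vbar s'))|
      ≤ π a * σ b * (γ * M) := by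
    intro a b
    rw [abs_mul, abs_mul, abs_of_nonneg (hπ.1 a), abs_of_nonneg (hσ.1 b), abs_mul,
      abs_of_nonneg hγ0]
    have hsum : |∑ s', T s a b s' * (V s' - Vbar s')| ≤ M := by
      refine (Finset.abs_sum_le_sum_abs _ _).trans ?_
      calc ∑ s', |T s a b s' * (V s' - Vbar s')| ≤ ∑ s', T s a b s' * M := by
            refine Finset.sum_le_sum fun s' _ => ?_
            rw [abs_mul, abs_of_nonneg (hT0 s a b s')]
            exact mul_le_mul_of_nonneg_left (hM s') (hT0 s a b s')
        _ = M := by rw [← Finset.sum_mul, hT1 s a b, one_mul]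
    have h1 : γ * |∑ s', T s a b s' * (V s' - Vbar s')| ≤ γ * M :=
      mul_le_mul_of_nonneg_left hsum hγ0
    have h2 : 0 ≤ π a * σ b := mul_nonneg (hπ.1 a) (hσ.1 b)
    exact mul_le_mul_of_nonneg_left h1 h2
  calc |∑ a, ∑ b, π a * σ b * (γ * ∑ s', T s a b s' * (V s' - Vbar s'))|
      ≤ ∑ a, ∑ b, π a * σ b * (γ * M) := by
        refine (Finset.abs_sum_le_sum_abs _ _).trans (Finset.sum_le_sum fun a _ => ?_)
        exact (Finset.abs_sum_le_sum_abs _ _).trans (Finset.sum_le_sum fun b _ => step a b)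
    _ = γ * M := by
        have : ∑ a, ∑ b, π a * σ b * (γ * M)
            = (∑ a, π a) * (∑ b, σ b) * (γ * M) := by
          rw [Finset.sum_mul_sum, Finset.sum_mul]
          exact Finset.sum_congr rfl fun a _ => by rw [Finset.sum_mul]
        rw [this, hπ.2, hσ.2, one_mul, one_mul]

lemma abs_sSup_le {X : Type*} {s : Set X} (hs : s.Nonempty) {g : X → ℝ} {C : ℝ}
    (h : ∀ p ∈ s, |g p| ≤ C) : |sSup (g '' s)| ≤ C := by
  have bdd : BddAbove (g '' s) := ⟨C, by rintro _ ⟨p, hp, rfl⟩; exact (abs_le.1 (h p hp)).2⟩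
  rw [abs_le]
  constructor
  · obtain ⟨p, hp⟩ := hs
    exact le_trans (abs_le.1 (h p hp)).1 (le_csSup bdd (Set.mem_image_of_mem g hp))
  · exact csSup_le (hs.image g) (by rintro _ ⟨p, hp, rfl⟩; exact (abs_le.1 (h p hp)).2)

lemma abs_sInf_le {X : Type*} {s : Set X} (hs : s.Nonempty) {g : X → ℝ} {C : ℝ}
    (h : ∀ p ∈ s, |g p| ≤ C) : |sInf (g '' s)| ≤ C := by
  have bdd : BddBelow (g '' s) := ⟨-C, by rintro _ ⟨p, hp, rfl⟩; exact (abs_le.1 (h p hp)).1⟩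
  rw [abs_le]
  constructor
  · exact le_csInf (hs.image g) (by rintro _ ⟨p, hp, rfl⟩; exact (abs_le.1 (h p hp)).1)
  · obtain ⟨p, hp⟩ := hs
    exact le_trans (csInf_le bdd (Set.mem_image_of_mem g hp)) (abs_le.1 (h p hp)).2


/-- (Theorem 1, Contraction) For nonzero `β_pl`, `β_op`, the soft Bellman operator `B_pl`
is a `γ`-contraction in the sup norm: `max_s |B_pl V s − B_pl V̄ s| ≤ γ · max_s |V s − V̄ s|`. -/
theorem Bpl_contraction [Nonempty S] [Nonempty A] [Nonempty B]
    (R : S → A → B → ℝ) (T : S → A → B → S → ℝ) (γ : ℝ) (hγ0 : 0 ≤ γ) (hγ1 : γ < 1)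
    (hT0 : ∀ s a b s', 0 ≤ T s a b s') (hT1 : ∀ s a b, ∑ s', T s a b s' = 1)
    (ρpl : S → A → ℝ) (ρop : S → B → ℝ)
    (hρpl : ∀ s a, 0 < ρpl s a) (hρpl1 : ∀ s, ∑ a, ρpl s a = 1)
    (hρop : ∀ s b, 0 < ρop s b) (hρop1 : ∀ s, ∑ b, ρop s b = 1)
    (βpl βop : ℝ) (hβpl : βpl ≠ 0) (hβop : βop ≠ 0) (V Vbar : S → ℝ) :
    (⨆ s, |Bpl R T γ ρpl ρop βpl βop V s - Bpl R T γ ρpl ρop βpl βop Vbar s|)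
      ≤ γ * ⨆ s, |V s - Vbar s| := by
  set M := ⨆ s, |V s - Vbar s| with hMdef
  have hM : ∀ s', |V s' - Vbar s'| ≤ M := fun s' => by
    rw [hMdef]
    exact le_ciSup (Set.Finite.bddAbove (Set.finite_range fun t => |V t - Vbar t|)) s'
  apply ciSup_le
  intro s
  -- nonempty simplexes
  have hAne : (simplex A).Nonempty := ⟨ρpl s, fun a => (hρpl s a).le, hρpl1 s⟩
  have hBne : (simplex B).Nonempty := ⟨ρop s, fun b => (hρop s b).le, hρop1 s⟩
  -- uniform bound constant for a given value function
  set C : (S → ℝ) → ℝ := fun W =>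
    (∑ a, ∑ b, |R s a b + γ * ∑ s', T s a b s' * W s'|)
      + |1 / βpl| * (∑ a, (1 + |Real.log (ρpl s a)|))
      + |1 / βop| * (∑ b, (1 + |Real.log (ρop s b)|)) with hC
  have hFbound : ∀ (W : S → ℝ) {π : A → ℝ} {σ : B → ℝ}, π ∈ simplex A → σ ∈ simplex B →
      |freeEnergy R T γ ρpl ρop βpl βop π σ s W| ≤ C W := fun W _ _ hπ hσ =>
    freeEnergy_abs_bound R T γ ρpl ρop hρpl hρop βpl βop s W hπ hσ
  -- bound on extOp values
  have hExtBound : ∀ (W : S → ℝ) {π : A → ℝ}, π ∈ simplex A →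
      |extOp βop (fun σ => freeEnergy R T γ ρpl ρop βpl βop π σ s W)| ≤ C W := by
    intro W π hπ
    unfold extOp
    split_ifs
    · exact abs_sSup_le hBne fun σ hσ => hFbound W hπ hσ
    · exact abs_sInf_le hBne fun σ hσ => hFbound W hπ hσ
  -- pointwise (in π) difference of extOp values
  have hExtDiff : ∀ π ∈ simplex A,
      |extOp βop (fun σ => freeEnergy R T γ ρpl ρop βpl βop π σ s V)
        - extOp βop (fun σ => freeEnergy R T γ ρpl ρop βpl βop π σ s Vbar)| ≤ γ * M := by
    intro π hπ
    have hdiff : ∀ σ ∈ simplex B,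
        |freeEnergy R T γ ρpl ρop βpl βop π σ s V
          - freeEnergy R T γ ρpl ρop βpl βop π σ s Vbar| ≤ γ * M := fun σ hσ =>
      freeEnergy_diff_bound R T γ hγ0 hT0 hT1 ρpl ρop βpl βop s V Vbar hM hπ hσ
    unfold extOp
    split_ifs
    · refine abs_sSup_sub_sSup_le hBne ?_ ?_ hdiff
      · exact ⟨C V, by rintro _ ⟨σ, hσ, rfl⟩; exact (abs_le.1 (hFbound V hπ hσ)).2⟩
      · exact ⟨C Vbar, by rintro _ ⟨σ, hσ, rfl⟩; exact (abs_le.1 (hFbound Vbar hπ hσ)).2⟩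
    · refine abs_sInf_sub_sInf_le hBne ?_ ?_ hdiff
      · exact ⟨-C V, by rintro _ ⟨σ, hσ, rfl⟩; exact (abs_le.1 (hFbound V hπ hσ)).1⟩
      · exact ⟨-C Vbar, by rintro _ ⟨σ, hσ, rfl⟩; exact (abs_le.1 (hFbound Vbar hπ hσ)).1⟩
  -- assemble
  unfold Bpl
  refine abs_sSup_sub_sSup_le hAne ?_ ?_ hExtDiff
  · exact ⟨C V, by rintro _ ⟨π, hπ, rfl⟩; exact (abs_le.1 (hExtBound V hπ)).2⟩
  · exact ⟨C Vbar, by rintro _ ⟨π, hπ, rfl⟩; exact (abs_le.1 (hExtBound Vbar hπ)).2⟩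
end
end

section
/- (Theorem 2, static regret) Let D > 0, G > 0, R ≥ 1 a natural number, and let L_1, …, L_R : ℝ → ℝ be convex differentiable functions with |L_j'(x)| ≤ G for all x ∈ [−D, D]. Let η = D/(G·√R) and define iterates x_1 ∈ [−D, D] and x_{j+1} = clamp(x_j − η·L_j'(x_j), −D, D) for j = 1, …, R−1, where clamp(y, −D, D) projects y onto the interval [−D, D]. Then Σ_{j=1}^R L_j(x_j) − min_{u∈[−D,D]} Σ_{j=1}^R L_j(u) ≤ (5/2)·G·D·√R; in particular, the static regret of online gradient descent grows as O(√R). -/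
/-!
Projection onto `[-D, D]` is nonexpansive, so one projected gradient step with gradient `g`
satisfies `(x' - u)² ≤ (x - u)² - 2η g (x - u) + η² g²` for every comparator `u`.
Telescoping gives `2η ∑ g_j (x_j - u) ≤ (2D)² + η² R G²`, and convexity bounds the regret
against `u` by `∑ g_j (x_j - u)`. With `η = D / (G √R)` the right-hand side is
`2GD√R + GD√R/2`.
-/

open Set Finset

theorem ConvexOn.sub_le_mul_sub_of_hasDerivAt {S : Set ℝ} {f : ℝ → ℝ} {f' a u : ℝ}
    (hfc : ConvexOn ℝ S f) (ha : a ∈ S) (hu : u ∈ S) (hf : HasDerivAt f f' a) :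
    f a - f u ≤ f' * (a - u) := by
  rcases lt_trichotomy a u with hau | rfl | hua
  · have hslope := hfc.le_slope_of_hasDerivAt ha hu hau hf
    rw [slope_def_field, le_div_iff₀ (sub_pos.2 hau)] at hslope
    linarith
  · simp
  · have hslope := hfc.slope_le_of_hasDerivAt hu ha hua hf
    rw [slope_def_field, div_le_iff₀ (sub_pos.2 hua)] at hslope
    linarith

theorem Finset.sum_range_le_of_le_sub_add {c d e : ℕ → ℝ}
    (h : ∀ j, d (j + 1) ≤ d j - c j + e j) (n : ℕ) :
    ∑ j ∈ range n, c j ≤ d 0 - d n + ∑ j ∈ range n, e j := by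
  calc ∑ j ∈ range n, c j ≤ ∑ j ∈ range n, (d j - d (j + 1) + e j) :=
        sum_le_sum fun j _ => by linarith [h j]
    _ = d 0 - d n + ∑ j ∈ range n, e j := by
        rw [sum_add_distrib, sum_range_sub']

theorem abs_max_min_sub_le {a b t u : ℝ} (hu : u ∈ Icc a b) :
    |max a (min b t) - u| ≤ |t - u| := by
  have hab : a ≤ b := hu.1.trans hu.2
  have hcontract := abs_projIcc_sub_projIcc hab (c := t) (d := u)
  rwa [projIcc_of_mem hab hu, coe_projIcc] at hcontract

section ProjectedGradientDescent

variable {a b η : ℝ} {g x : ℕ → ℝ}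

theorem projected_gradient_iterate_mem (hab : a ≤ b) (hx₀ : x 0 ∈ Icc a b)
    (hstep : ∀ j, x (j + 1) = max a (min b (x j - η * g j))) (j : ℕ) : x j ∈ Icc a b := by
  cases j with
  | zero => exact hx₀
  | succ j =>
    rw [hstep j, ← coe_projIcc a b hab]
    exact Subtype.prop _

theorem projected_gradient_step_sq_le (hstep : ∀ j, x (j + 1) = max a (min b (x j - η * g j)))
    {u : ℝ} (hu : u ∈ Icc a b) (j : ℕ) :
    (x (j + 1) - u) ^ 2 ≤ (x j - u) ^ 2 - 2 * η * g j * (x j - u) + η ^ 2 * g j ^ 2 := by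
  have hproj : (x (j + 1) - u) ^ 2 ≤ (x j - η * g j - u) ^ 2 := by
    rw [hstep j]
    exact sq_le_sq.2 (abs_max_min_sub_le hu)
  linarith

theorem projected_gradient_sum_mul_sub_le
    (hstep : ∀ j, x (j + 1) = max a (min b (x j - η * g j))) {u : ℝ} (hu : u ∈ Icc a b)
    (n : ℕ) :
    2 * η * ∑ j ∈ range n, g j * (x j - u)
      ≤ (x 0 - u) ^ 2 - (x n - u) ^ 2 + η ^ 2 * ∑ j ∈ range n, g j ^ 2 := by
  rw [mul_sum, mul_sum]
  refine sum_range_le_of_le_sub_add (d := fun j => (x j - u) ^ 2) (fun j => ?_) n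
  linarith [projected_gradient_step_sq_le hstep hu j]

theorem projected_gradient_linearized_regret_le (hη : 0 < η) {G : ℝ} (hx₀ : x 0 ∈ Icc a b)
    (hg : ∀ j, |g j| ≤ G) (hstep : ∀ j, x (j + 1) = max a (min b (x j - η * g j)))
    {u : ℝ} (hu : u ∈ Icc a b) (n : ℕ) :
    ∑ j ∈ range n, g j * (x j - u) ≤ (b - a) ^ 2 / (2 * η) + η * n * G ^ 2 / 2 := by
  have hsum := projected_gradient_sum_mul_sub_le hstep hu n
  have hinit : (x 0 - u) ^ 2 ≤ (b - a) ^ 2 := by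
    obtain ⟨hxa, hxb⟩ := hx₀
    obtain ⟨hua, hub⟩ := hu
    exact sq_le_sq' (by linarith) (by linarith)
  have hgrad : ∑ j ∈ range n, g j ^ 2 ≤ n * G ^ 2 := by
    simpa using sum_le_sum fun j (_ : j ∈ range n) => sq_le_sq' (abs_le.1 (hg j)).1
      (abs_le.1 (hg j)).2
  rw [div_add_div _ _ (by positivity) two_ne_zero, le_div_iff₀ (by positivity)]
  nlinarith [sq_nonneg (x n - u)]

end ProjectedGradientDescent

theorem sub_csInf_image_le {α : Type*} {s : Set α} {f : α → ℝ} {c B : ℝ} (hs : s.Nonempty)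
    (h : ∀ u ∈ s, c - f u ≤ B) : c - sInf (f '' s) ≤ B := by
  have hlow : c - B ≤ sInf (f '' s) :=
    le_csInf (hs.image f) (forall_mem_image.2 fun u hu => by linarith [h u hu])
  linarith

/-- (Theorem 2, static regret) Online projected gradient descent over `[−D, D]` with
step size `η = D/(G·√R)` on convex differentiable losses with gradients bounded by `G`
achieves static regret at most `(5/2)·G·D·√R`, i.e. `O(√R)`. -/
theorem ogd_static_regret (D G : ℝ) (hD : 0 < D) (hG : 0 < G) (R : ℕ) (hR : 1 ≤ R)
    (L L' : ℕ → ℝ → ℝ)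
    (hconv : ∀ j, ConvexOn ℝ Set.univ (L j))
    (hderiv : ∀ j x, HasDerivAt (L j) (L' j x) x)
    (hGbound : ∀ j, ∀ x ∈ Set.Icc (-D) D, |L' j x| ≤ G)
    (x : ℕ → ℝ) (hx0 : x 0 ∈ Set.Icc (-D) D)
    (hstep : ∀ j, x (j + 1) =
      max (-D) (min D (x j - (D / (G * Real.sqrt R)) * L' j (x j)))) :
    (∑ j ∈ Finset.range R, L j (x j))
        - sInf ((fun u => ∑ j ∈ Finset.range R, L j u) '' Set.Icc (-D) D)
      ≤ (5 / 2) * G * D * Real.sqrt R := by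
  set η := D / (G * Real.sqrt R) with hη
  have hsqrtR : 0 < Real.sqrt R := Real.sqrt_pos.2 (by exact_mod_cast hR)
  have hηpos : 0 < η := by positivity
  have hmem := projected_gradient_iterate_mem (by linarith) hx0 hstep
  refine sub_csInf_image_le ⟨D, by simp [hD.le]⟩ fun u hu => ?_
  have hlinear := projected_gradient_linearized_regret_le hηpos hx0
    (fun j => hGbound j _ (hmem j)) hstep hu R
  have hconvex :
      ∑ j ∈ range R, (L j (x j) - L j u) ≤ ∑ j ∈ range R, L' j (x j) * (x j - u) :=
    sum_le_sum fun j _ =>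
      (hconv j).sub_le_mul_sub_of_hasDerivAt (mem_univ _) (mem_univ _) (hderiv j _)
  have hbound : (D - -D) ^ 2 / (2 * η) + η * R * G ^ 2 / 2 = 5 / 2 * G * D * Real.sqrt R := by
    have hsq := Real.sq_sqrt (Nat.cast_nonneg (α := ℝ) R)
    rw [hη]
    field_simp
    linear_combination (-1 : ℝ) * hsq
  rw [← sum_sub_distrib]
  linarith
end

section
/- (Theorem 2, dynamic regret) Let D > 0, G > 0, η > 0, R ≥ 1 a natural number, and let L_1, …, L_R : ℝ → ℝ be convex differentiable functions with |L_j'(x)| ≤ G for all x ∈ [−D, D]. Define iterates x_1 ∈ [−D, D] and x_{j+1} = clamp(x_j − η·L_j'(x_j), −D, D) for j = 1, …, R−1. Then for every comparator sequence u_1, …, u_R ∈ [−D, D], Σ_{j=1}^R (L_j(x_j) − L_j(u_j)) ≤ (2D²)/(η) + (2D/η)·Σ_{j=1}^{R−1} |u_{j+1} − u_j| + (η·G²·R)/2; in particular, with η proportional to 1/√R the dynamic regret is O(√R·(1 + Σ_{j=1}^{R−1} |u_{j+1} − u_j|)), a bound controlled by the path length of the time-varying comparators. -/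
lemma grad_ineq (f : ℝ → ℝ) (f' : ℝ → ℝ) (h : ConvexOn ℝ Set.univ f)
    (hd : ∀ y, HasDerivAt f (f' y) y) (a b : ℝ) :
    f a - f b ≤ f' a * (a - b) := by
  rcases lt_trichotomy a b with hab | hab | hab
  · have := h.le_slope_of_hasDerivAt (Set.mem_univ a) (Set.mem_univ b) hab (hd a)
    rw [slope_def_field] at this
    have hba : 0 < b - a := by linarith
    rw [le_div_iff₀ hba] at this
    nlinarith
  · simp [hab]
  · have := h.slope_le_of_hasDerivAt (Set.mem_univ b) (Set.mem_univ a) hab (hd a)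
    rw [slope_def_field] at this
    have hba : 0 < a - b := by linarith
    rw [div_le_iff₀ hba] at this
    nlinarith

/-- (Theorem 2, dynamic regret) Online projected gradient descent over `[−D, D]` with
fixed step size `η` on convex differentiable losses with gradients bounded by `G` achieves,
against any comparator sequence `u_1, …, u_R` in `[−D, D]`, dynamic regret at most
`2D²/η + (2D/η)·Σ_j |u_{j+1} − u_j| + η·G²·R/2`, a bound controlled by the comparators'
path length. -/
theorem ogd_dynamic_regret (D G η : ℝ) (hD : 0 < D) (hG : 0 < G) (hη : 0 < η)
    (R : ℕ) (hR : 1 ≤ R) (L L' : ℕ → ℝ → ℝ)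
    (hconv : ∀ j, ConvexOn ℝ Set.univ (L j))
    (hderiv : ∀ j x, HasDerivAt (L j) (L' j x) x)
    (hGbound : ∀ j, ∀ x ∈ Set.Icc (-D) D, |L' j x| ≤ G)
    (x : ℕ → ℝ) (hx0 : x 0 ∈ Set.Icc (-D) D)
    (hstep : ∀ j, x (j + 1) = max (-D) (min D (x j - η * L' j (x j))))
    (u : ℕ → ℝ) (hu : ∀ j < R, u j ∈ Set.Icc (-D) D) :
    (∑ j ∈ Finset.range R, (L j (x j) - L j (u j)))
      ≤ 2 * D ^ 2 / η + (2 * D / η) * (∑ j ∈ Finset.range (R - 1), |u (j + 1) - u j|)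
        + η * G ^ 2 * R / 2 := by
  obtain ⟨n, rfl⟩ : ∃ n, R = n + 1 := ⟨R - 1, (Nat.succ_pred_eq_of_pos hR).symm⟩
  set g : ℕ → ℝ := fun j => L' j (x j) with hg
  have hxmem : ∀ j, x j ∈ Set.Icc (-D) D := by
    intro j
    induction j with
    | zero => exact hx0
    | succ m _ =>
      rw [hstep m]
      exact ⟨le_max_left _ _, max_le (by linarith) (min_le_left _ _)⟩
  have hgb : ∀ j, |g j| ≤ G := fun j => hGbound j _ (hxmem j)
  -- squared-distance contraction of the clamp step
  have hkey : ∀ j, ∀ v ∈ Set.Icc (-D) D,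
      (x (j+1) - v)^2 ≤ (x j - v)^2 - 2*η*(g j)*(x j - v) + η^2*(g j)^2 := by
    intro j v hv
    obtain ⟨hv1, hv2⟩ := hv
    have h1 : (x (j+1) - v)^2 ≤ (x j - η * g j - v)^2 := by
      rw [hstep j]
      set y := x j - η * g j with hy
      rcases le_total y (-D) with h' | h'
      · rw [min_eq_right (by linarith), max_eq_left h']
        nlinarith
      · rcases le_total D y with h'' | h''
        · rw [min_eq_left h'', max_eq_right (by linarith : -D ≤ D)]
          nlinarith
        · rw [min_eq_right h'', max_eq_right h']
    nlinarith [h1]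
  set a : ℕ → ℝ := fun j => (x j - u j)^2 with ha
  set b : ℕ → ℝ := fun j => (x (j+1) - u j)^2 with hb
  -- per-round regret bound
  have hround : ∀ j < n + 1,
      L j (x j) - L j (u j) ≤ (a j - b j) / (2*η) + η * G^2 / 2 := by
    intro j hj
    have h1 : L j (x j) - L j (u j) ≤ g j * (x j - u j) :=
      grad_ineq (L j) (L' j) (hconv j) (hderiv j) (x j) (u j)
    have h2 := hkey j (u j) (hu j hj)
    have h3 : (g j)^2 ≤ G^2 := by
      have := hgb j
      nlinarith [abs_nonneg (g j), le_abs_self (g j), neg_abs_le (g j)]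
    have h4 : g j * (x j - u j) ≤ (a j - b j) / (2*η) + η * (g j)^2 / 2 := by
      rw [div_add_div _ _ (by positivity : (2*η) ≠ (0:ℝ)) (two_ne_zero), le_div_iff₀ (by positivity)]
      simp only [ha, hb]
      nlinarith [h2]
    have h5 : η * (g j)^2 / 2 ≤ η * G^2 / 2 := by nlinarith
    linarith
  -- sum up
  have hsum1 : (∑ j ∈ Finset.range (n+1), (L j (x j) - L j (u j)))
      ≤ (∑ j ∈ Finset.range (n+1), (a j - b j)) / (2*η) + η * G^2 * (n+1) / 2 := by
    calc (∑ j ∈ Finset.range (n+1), (L j (x j) - L j (u j)))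
        ≤ ∑ j ∈ Finset.range (n+1), ((a j - b j) / (2*η) + η * G^2 / 2) :=
          Finset.sum_le_sum (fun j hj => hround j (Finset.mem_range.mp hj))
      _ = (∑ j ∈ Finset.range (n+1), (a j - b j)) / (2*η) + η * G^2 * (n+1) / 2 := by
          rw [Finset.sum_add_distrib, Finset.sum_const, ← Finset.sum_div]
          simp
          ring
  -- telescoping bound on ∑ (a j - b j)
  have htel : (∑ j ∈ Finset.range (n+1), (a j - b j))
      = a 0 - b n + ∑ j ∈ Finset.range n, (a (j+1) - b j) := by
    rw [Finset.sum_sub_distrib, Finset.sum_range_succ' a, Finset.sum_range_succ b,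
      Finset.sum_sub_distrib]
    ring
  have hdiff : ∀ j < n, a (j+1) - b j ≤ 4 * D * |u (j+1) - u j| := by
    intro j hj
    have hu1 := hu j (by omega)
    have hu2 := hu (j+1) (by omega)
    have hx1 := hxmem (j+1)
    have heq : a (j+1) - b j = (u j - u (j+1)) * (2 * x (j+1) - u j - u (j+1)) := by
      simp only [ha, hb]; ring
    rw [heq]
    calc (u j - u (j+1)) * (2 * x (j+1) - u j - u (j+1))
        ≤ |(u j - u (j+1)) * (2 * x (j+1) - u j - u (j+1))| := le_abs_self _
      _ = |u j - u (j+1)| * |2 * x (j+1) - u j - u (j+1)| := abs_mul _ _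
      _ ≤ |u (j+1) - u j| * (4 * D) := by
          rw [abs_sub_comm]
          apply mul_le_mul_of_nonneg_left _ (abs_nonneg _)
          rw [abs_le]
          constructor <;> [skip; skip] <;>
            (obtain ⟨h1, h2⟩ := hu1; obtain ⟨h3, h4⟩ := hu2;
             obtain ⟨h5, h6⟩ := hx1; linarith)
      _ = 4 * D * |u (j+1) - u j| := by ring
  have ha0 : a 0 ≤ 4 * D^2 := by
    obtain ⟨h1, h2⟩ := hx0
    obtain ⟨h3, h4⟩ := hu 0 (by omega)
    simp only [ha]
    nlinarith
  have hbn : (0:ℝ) ≤ b n := sq_nonneg _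
  have htelb : (∑ j ∈ Finset.range (n+1), (a j - b j))
      ≤ 4 * D^2 + 4 * D * (∑ j ∈ Finset.range n, |u (j+1) - u j|) := by
    rw [htel]
    have := Finset.sum_le_sum (fun j hj => hdiff j (Finset.mem_range.mp hj))
    rw [← Finset.mul_sum] at this
    linarith
  -- conclude
  have hfin : (∑ j ∈ Finset.range (n+1), (a j - b j)) / (2*η)
      ≤ 2 * D^2 / η + (2 * D / η) * (∑ j ∈ Finset.range n, |u (j+1) - u j|) := by
    have h1 : (∑ j ∈ Finset.range (n+1), (a j - b j)) / (2*η)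
        ≤ (4 * D^2 + 4 * D * (∑ j ∈ Finset.range n, |u (j+1) - u j|)) / (2*η) :=
      div_le_div_of_nonneg_right htelb (by positivity)
    have h2 : (4 * D^2 + 4 * D * (∑ j ∈ Finset.range n, |u (j+1) - u j|)) / (2*η)
        = 2 * D^2 / η + (2 * D / η) * (∑ j ∈ Finset.range n, |u (j+1) - u j|) := by
      field_simp
      ring
    linarith [h1, h2.le, h2.ge]
  have : ((n:ℝ)+1) = ((n+1 : ℕ) : ℝ) := by push_cast; ring
  simp only [Nat.add_sub_cancel]
  calc (∑ j ∈ Finset.range (n+1), (L j (x j) - L j (u j)))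
      ≤ (∑ j ∈ Finset.range (n+1), (a j - b j)) / (2*η) + η * G^2 * (n+1) / 2 := hsum1
    _ ≤ 2 * D ^ 2 / η + (2 * D / η) * (∑ j ∈ Finset.range n, |u (j + 1) - u j|)
        + η * G ^ 2 * (((n+1 : ℕ)) : ℝ) / 2 := by push_cast; linarith
end
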